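/- For the smallest eigenvalue δ̃_N^{(1)} of the normal matrix C̃_N(x,k) under condition C_d, the sharper bound δ̃_N^{(1)}(x,k) ≤ (Mσ_k)²(N+1)/(‖L(x,k)‖₂² + 1) holds. -/

import Mathlib

open Matrix

/-- The operator norm on real matrices induced by the Euclidean (ℓ²) norm. -/
noncomputable def opNorm {n : Type*} [Fintype n] [DecidableEq n]
    (P : Matrix n n ℝ) : ℝ :=
  ‖(Matrix.toEuclideanCLM (𝕜 := ℝ) P : EuclideanSpace ℝ n →L[ℝ] EuclideanSpace ℝ n)‖

/-- The Euclidean norm of a vector. -/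
noncomputable def vnorm {n : Type*} [Fintype n] (v : n → ℝ) : ℝ :=
  Real.sqrt (∑ i, v i ^ 2)

/-- The Jacobian cocycle `F_k^n(y)` of `f = f_k` at the point `y`: the product of the
one-step Jacobians `F = F_k` along the orbit of `y`, latest on the left. -/
def jacCoc {d : ℕ} (F : (Fin d → ℝ) → Matrix (Fin d) (Fin d) ℝ)
    (f : (Fin d → ℝ) → (Fin d → ℝ)) (y : Fin d → ℝ) : ℕ → Matrix (Fin d) (Fin d) ℝ
  | 0 => 1
  | (n + 1) => F (f^[n] y) * jacCoc F f y n

/-- The derivative `∂f_k^n/∂k(x)` defined by the recursion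
`∂f_k^{n+1}/∂k(x) = F_k(f_k^n(x)) ∂f_k^n/∂k(x) + ∂f_k/∂k(f_k^n(x))`. -/
def parDer {d : ℕ} (F : (Fin d → ℝ) → Matrix (Fin d) (Fin d) ℝ)
    (f : (Fin d → ℝ) → (Fin d → ℝ)) (w : (Fin d → ℝ) → (Fin d → ℝ))
    (x : Fin d → ℝ) : ℕ → Fin d → ℝ
  | 0 => 0
  | (n + 1) => (F (f^[n] x)).mulVec (parDer F f w x n) + w (f^[n] x)

/-- The augmented `d × (d+1)` Jacobian `F̃_k^n(x) = [F_k^n(x) | ∂f_k^n/∂k(x)]`. -/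
def augment {d : ℕ} (F : Matrix (Fin d) (Fin d) ℝ) (w : Fin d → ℝ) :
    Matrix (Fin d) (Fin d ⊕ Unit) ℝ :=
  Matrix.of fun i j => Sum.elim (fun j' => F i j') (fun _ => w i) j

/-- The normal matrix `C̃_N(x,k) = ∑_{n=0}^N F̃_k^n(x)ᵀ F̃_k^n(x)`. -/
noncomputable def normalMatrix {d : ℕ} (F : (Fin d → ℝ) → Matrix (Fin d) (Fin d) ℝ)
    (f : (Fin d → ℝ) → (Fin d → ℝ)) (w : (Fin d → ℝ) → (Fin d → ℝ))
    (x : Fin d → ℝ) (N : ℕ) : Matrix (Fin d ⊕ Unit) (Fin d ⊕ Unit) ℝ :=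
  ∑ n ∈ Finset.range (N + 1),
    (augment (jacCoc F f x n) (parDer F f w x n))ᵀ * augment (jacCoc F f x n) (parDer F f w x n)

/-!
Variation of constants gives `∂f^n/∂k(x) = F^n(x) ∑_{i<n} [F^{i+1}(x)]⁻¹ ∂f/∂k(f^i(x))`, and the
cocycle property `F^{n+i+1}(x) = F^{i+1}(f^n(x)) F^n(x)` turns `F^n(x)` times the tail of the series
`L(x)` into `L(f^n(x))`. Hence `F̃^n(x) (L(x), -1) = F^n(x) L(x) - ∂f^n/∂k(x) = L(f^n(x))` has norm
at most `Mσ`, so the quadratic form of `C̃_N(x)` at `(L(x), -1)` is at most `(N+1)(Mσ)²`; the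
smallest eigenvalue, being the infimum of the Rayleigh quotient, is at most this divided by
`‖L(x)‖² + 1`.
-/

open Module End in
theorem LinearMap.IsSymmetric.exists_hasEigenvalue_le_rayleigh {𝕜 E : Type*} [RCLike 𝕜]
    [NormedAddCommGroup E] [InnerProductSpace 𝕜 E] [FiniteDimensional 𝕜 E] {T : E →ₗ[𝕜] E}
    (hT : T.IsSymmetric) {x : E} (hx : x ≠ 0) :
    ∃ μ : ℝ, HasEigenvalue T μ ∧ μ ≤ RCLike.re (inner 𝕜 (T x) x) / ‖x‖ ^ 2 := by
  have : Nontrivial E := ⟨x, 0, hx⟩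
  refine ⟨_, hT.hasEigenvalue_iInf_of_finiteDimensional, ?_⟩
  refine ciInf_le ⟨-‖T.toContinuousLinearMap‖, ?_⟩ (⟨x, hx⟩ : {y : E // y ≠ 0})
  rintro _ ⟨y, rfl⟩
  exact neg_le_of_abs_le (T.toContinuousLinearMap.rayleighQuotient_le_norm y)

open Module End in
theorem Matrix.IsHermitian.exists_hasEigenvalue_le_dotProduct_mulVec {n : Type*} [Fintype n]
    [DecidableEq n] {A : Matrix n n ℝ} (hA : A.IsHermitian) {v : n → ℝ} (hv : v ≠ 0) :
    ∃ μ : ℝ, HasEigenvalue (toLin' A) μ ∧ μ ≤ (v ⬝ᵥ A *ᵥ v) / (v ⬝ᵥ v) := by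
  obtain ⟨μ, hμ, hle⟩ := (isSymmetric_toEuclideanLin_iff.mpr hA).exists_hasEigenvalue_le_rayleigh
    (x := WithLp.toLp 2 v) (by simpa using hv)
  refine ⟨μ, ?_, ?_⟩
  · rw [hasEigenvalue_iff_mem_spectrum, spectrum_toLin', ← spectrum_toLpLin 2]
    exact hμ.mem_spectrum
  · have hnorm : ‖WithLp.toLp 2 v‖ ^ 2 = v ⬝ᵥ v := by
      rw [← real_inner_self_eq_norm_sq, EuclideanSpace.inner_toLp_toLp]; rfl
    simpa [hnorm, EuclideanSpace.inner_toLp_toLp, dotProduct_comm] using hle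

theorem Matrix.dotProduct_sum_transpose_mul_self_mulVec {ι m n R : Type*} [Fintype m]
    [Fintype n] [CommSemiring R] (s : Finset ι) (A : ι → Matrix m n R) (v : n → R) :
    v ⬝ᵥ (∑ i ∈ s, (A i)ᵀ * A i) *ᵥ v = ∑ i ∈ s, (A i *ᵥ v) ⬝ᵥ (A i *ᵥ v) := by
  simp only [sum_mulVec, dotProduct_sum, ← mulVec_mulVec, dotProduct_transpose_mulVec]

theorem vnorm_nonneg {n : Type*} [Fintype n] (v : n → ℝ) : 0 ≤ vnorm v :=
  Real.sqrt_nonneg _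

theorem vnorm_sq {n : Type*} [Fintype n] (v : n → ℝ) : vnorm v ^ 2 = v ⬝ᵥ v := by
  rw [vnorm, Real.sq_sqrt (Finset.sum_nonneg fun i _ => sq_nonneg _)]
  simp only [dotProduct, sq]

theorem vnorm_eq_norm_toLp {n : Type*} [Fintype n] (v : n → ℝ) :
    vnorm v = ‖WithLp.toLp 2 v‖ := by
  simp [vnorm, EuclideanSpace.norm_eq]

theorem vnorm_mulVec_le {n : Type*} [Fintype n] [DecidableEq n] (P : Matrix n n ℝ)
    (v : n → ℝ) : vnorm (P *ᵥ v) ≤ opNorm P * vnorm v := by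
  simpa only [vnorm_eq_norm_toLp, opNorm, Matrix.toEuclideanCLM_toLp] using
    (Matrix.toEuclideanCLM (𝕜 := ℝ) P).le_opNorm (WithLp.toLp 2 v)

section VectorSeries

variable {n : Type*} [Fintype n] {g : ℕ → n → ℝ} {b : ℕ → ℝ} {B : ℝ}

theorem summable_of_vnorm_le_of_sum_range_le (hg : ∀ i, vnorm (g i) ≤ b i)
    (hb : ∀ m, ∑ i ∈ Finset.range m, b i ≤ B) : Summable g := by
  have hbs : Summable b := summable_of_sum_range_le (fun i => (vnorm_nonneg _).trans (hg i)) hb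
  have : Summable fun i => WithLp.toLp 2 (g i) :=
    .of_norm_bounded hbs fun i => (vnorm_eq_norm_toLp (g i)) ▸ hg i
  exact (PiLp.continuousLinearEquiv 2 ℝ fun _ : n => ℝ).summable.mpr this

theorem vnorm_tsum_le_of_sum_range_le (hg : ∀ i, vnorm (g i) ≤ b i)
    (hb : ∀ m, ∑ i ∈ Finset.range m, b i ≤ B) : vnorm (∑' i, g i) ≤ B := by
  have hbs : Summable b := summable_of_sum_range_le (fun i => (vnorm_nonneg _).trans (hg i)) hb
  have htoLp : WithLp.toLp 2 (∑' i, g i) = ∑' i, WithLp.toLp 2 (g i) :=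
    (PiLp.continuousLinearEquiv 2 ℝ fun _ : n => ℝ).symm.map_tsum
  rw [vnorm_eq_norm_toLp, htoLp]
  exact (tsum_of_norm_bounded hbs.hasSum fun i => (vnorm_eq_norm_toLp (g i)) ▸ hg i).trans
    (hbs.tsum_le_of_sum_range_le hb)

end VectorSeries

/-- The term `[F^{i+1}(y)]⁻¹ ∂f/∂k(f^i(y))` of the series `L(y)`. -/
noncomputable def pullbackTerm {d : ℕ} (F : (Fin d → ℝ) → Matrix (Fin d) (Fin d) ℝ)
    (f : (Fin d → ℝ) → (Fin d → ℝ)) (w : (Fin d → ℝ) → (Fin d → ℝ)) (y : Fin d → ℝ) (i : ℕ) :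
    Fin d → ℝ :=
  (jacCoc F f y (i + 1))⁻¹ *ᵥ w (f^[i] y)

section Cocycle

variable {d : ℕ} {F : (Fin d → ℝ) → Matrix (Fin d) (Fin d) ℝ} {f : (Fin d → ℝ) → (Fin d → ℝ)}
  {w : (Fin d → ℝ) → (Fin d → ℝ)} {x y : Fin d → ℝ} {M σ : ℝ}

theorem jacCoc_add (y : Fin d → ℝ) (n m : ℕ) :
    jacCoc F f y (n + m) = jacCoc F f (f^[n] y) m * jacCoc F f y n := by
  induction m with
  | zero => simp [jacCoc]
  | succ m ih =>
    rw [← add_assoc, jacCoc, ih, jacCoc, ← Function.iterate_add_apply, add_comm m n, mul_assoc]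

theorem isUnit_jacCoc_iterate (hx : ∀ n, IsUnit (jacCoc F f x n)) (n m : ℕ) :
    IsUnit (jacCoc F f (f^[n] x) m) := by
  have h := hx (n + m)
  rw [jacCoc_add, Matrix.isUnit_iff_isUnit_det, Matrix.det_mul] at h
  exact (Matrix.isUnit_iff_isUnit_det _).mpr (isUnit_of_mul_isUnit_left h)

theorem parDer_eq_jacCoc_mulVec_sum (hx : ∀ n, IsUnit (jacCoc F f x n)) (n : ℕ) :
    parDer F f w x n = jacCoc F f x n *ᵥ ∑ i ∈ Finset.range n, pullbackTerm F f w x i := by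
  induction n with
  | zero => simp [parDer, jacCoc]
  | succ n ih =>
    rw [parDer, ih, Finset.sum_range_succ, Matrix.mulVec_add, Matrix.mulVec_mulVec, pullbackTerm,
      Matrix.mulVec_mulVec,
      Matrix.mul_nonsing_inv _ ((jacCoc F f x (n + 1)).isUnit_iff_isUnit_det.mp (hx (n + 1))),
      Matrix.one_mulVec]
    rfl

theorem jacCoc_mulVec_pullbackTerm_add (hx : ∀ n, IsUnit (jacCoc F f x n)) (n i : ℕ) :
    jacCoc F f x n *ᵥ pullbackTerm F f w x (i + n) = pullbackTerm F f w (f^[n] x) i := by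
  rw [pullbackTerm, pullbackTerm, Matrix.mulVec_mulVec, show i + n + 1 = n + (i + 1) by ring,
    jacCoc_add, Matrix.mul_inv_rev, ← mul_assoc,
    Matrix.mul_nonsing_inv _ ((jacCoc F f x n).isUnit_iff_isUnit_det.mp (hx n)), one_mul,
    Function.iterate_add_apply]

theorem vnorm_pullbackTerm_le (hM : ∀ y, vnorm (w y) ≤ M) (i : ℕ) :
    vnorm (pullbackTerm F f w y i) ≤ opNorm ((jacCoc F f y (i + 1))⁻¹) * M :=
  (vnorm_mulVec_le _ _).trans (mul_le_mul_of_nonneg_left (hM _) (norm_nonneg _))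

theorem sum_range_opNorm_mul_le (hM : ∀ y, vnorm (w y) ≤ M)
    (hσ : ∀ m, ∑ i ∈ Finset.range m, opNorm ((jacCoc F f y (i + 1))⁻¹) ≤ σ) (m : ℕ) :
    ∑ i ∈ Finset.range m, opNorm ((jacCoc F f y (i + 1))⁻¹) * M ≤ M * σ := by
  rw [← Finset.sum_mul, mul_comm M]
  exact mul_le_mul_of_nonneg_right (hσ m) ((vnorm_nonneg _).trans (hM y))

theorem summable_pullbackTerm (hM : ∀ y, vnorm (w y) ≤ M)
    (hσ : ∀ m, ∑ i ∈ Finset.range m, opNorm ((jacCoc F f y (i + 1))⁻¹) ≤ σ) :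
    Summable (pullbackTerm F f w y) :=
  summable_of_vnorm_le_of_sum_range_le (vnorm_pullbackTerm_le hM)
    (sum_range_opNorm_mul_le hM hσ)

theorem vnorm_tsum_pullbackTerm_le (hM : ∀ y, vnorm (w y) ≤ M)
    (hσ : ∀ m, ∑ i ∈ Finset.range m, opNorm ((jacCoc F f y (i + 1))⁻¹) ≤ σ) :
    vnorm (∑' i, pullbackTerm F f w y i) ≤ M * σ :=
  vnorm_tsum_le_of_sum_range_le (vnorm_pullbackTerm_le hM) (sum_range_opNorm_mul_le hM hσ)

theorem jacCoc_mulVec_tsum_sub_parDer (hx : ∀ n, IsUnit (jacCoc F f x n))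
    (hs : Summable (pullbackTerm F f w x)) (n : ℕ) :
    jacCoc F f x n *ᵥ (∑' i, pullbackTerm F f w x i) - parDer F f w x n =
      ∑' i, pullbackTerm F f w (f^[n] x) i := by
  rw [parDer_eq_jacCoc_mulVec_sum hx, ← Matrix.mulVec_sub, ← hs.sum_add_tsum_nat_add n,
    add_sub_cancel_left]
  exact ((Matrix.mulVecLin (jacCoc F f x n)).toContinuousLinearMap.map_tsum
    ((summable_nat_add_iff n).mpr hs)).trans (tsum_congr (jacCoc_mulVec_pullbackTerm_add hx n))

end Cocycle

theorem augment_mulVec_sum_elim {d : ℕ} (P : Matrix (Fin d) (Fin d) ℝ) (p u : Fin d → ℝ) :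
    augment P p *ᵥ Sum.elim u (fun _ => -1) = P *ᵥ u - p := by
  ext i
  simp [augment, Matrix.mulVec, dotProduct, Fintype.sum_sum_type, sub_eq_add_neg]

theorem isHermitian_normalMatrix {d : ℕ} (F : (Fin d → ℝ) → Matrix (Fin d) (Fin d) ℝ)
    (f : (Fin d → ℝ) → (Fin d → ℝ)) (w : (Fin d → ℝ) → (Fin d → ℝ)) (x : Fin d → ℝ) (N : ℕ) :
    (normalMatrix F f w x N).IsHermitian := by
  refine (posSemidef_sum _ fun n _ => ?_).isHermitian
  simpa using posSemidef_conjTranspose_mul_self (augment (jacCoc F f x n) (parDer F f w x n))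

theorem smallest_eigenvalue_sharper_bound_general {d : ℕ} (M σ : ℝ)
    (F : (Fin d → ℝ) → Matrix (Fin d) (Fin d) ℝ)
    (f : (Fin d → ℝ) → (Fin d → ℝ)) (w : (Fin d → ℝ) → (Fin d → ℝ))
    (hM : ∀ y, vnorm (w y) ≤ M)
    (hσ : ∀ y : Fin d → ℝ, (∀ n, IsUnit (jacCoc F f y n)) →
      ∀ m : ℕ, ∑ i ∈ Finset.range m, opNorm ((jacCoc F f y (i + 1))⁻¹) ≤ σ)
    (x : Fin d → ℝ) (hx : ∀ n, IsUnit (jacCoc F f x n))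
    (N : ℕ)
    (L : Fin d → ℝ)
    (hL : L = ∑' i : ℕ, ((jacCoc F f x (i + 1))⁻¹).mulVec (w (f^[i] x))) :
    ∃ μ : ℝ, Module.End.HasEigenvalue (Matrix.toLin' (normalMatrix F f w x N)) μ ∧
      μ ≤ (M * σ) ^ 2 * (N + 1) / (vnorm L ^ 2 + 1) := by
  replace hL : L = ∑' i, pullbackTerm F f w x i := hL
  set v : Fin d ⊕ Unit → ℝ := Sum.elim L fun _ => -1
  have hv : v ≠ 0 := fun h => by simpa [v] using congrFun h (Sum.inr ())
  obtain ⟨μ, hμ, hμv⟩ :=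
    (isHermitian_normalMatrix F f w x N).exists_hasEigenvalue_le_dotProduct_mulVec hv
  refine ⟨μ, hμ, hμv.trans ?_⟩
  have hvv : v ⬝ᵥ v = vnorm L ^ 2 + 1 := by
    simp [v, vnorm_sq, dotProduct, Fintype.sum_sum_type]
  have hterm (n : ℕ) : (augment (jacCoc F f x n) (parDer F f w x n) *ᵥ v) ⬝ᵥ
      (augment (jacCoc F f x n) (parDer F f w x n) *ᵥ v) ≤ (M * σ) ^ 2 := by
    rw [augment_mulVec_sum_elim, ← vnorm_sq, hL,
      jacCoc_mulVec_tsum_sub_parDer hx (summable_pullbackTerm hM (hσ x hx))]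
    exact pow_le_pow_left₀ (vnorm_nonneg _)
      (vnorm_tsum_pullbackTerm_le hM (hσ _ (isUnit_jacCoc_iterate hx n))) 2
  rw [normalMatrix, dotProduct_sum_transpose_mul_self_mulVec, hvv]
  gcongr
  calc _ ≤ ∑ _n ∈ Finset.range (N + 1), (M * σ) ^ 2 := Finset.sum_le_sum fun n _ => hterm n
    _ = (M * σ) ^ 2 * (N + 1) := by simp [mul_comm]

/-- The sharper bound on the smallest eigenvalue of the normal matrix `C̃_N(x,k)` under
condition `C_d`: it has an eigenvalue `≤ (Mσ)²(N+1)/(‖L(x,k)‖₂² + 1)`, where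
`L(x,k) = ∑_{i=1}^∞ [F_k^i(x)]⁻¹ ∂f_k/∂k(f_k^{i-1}(x))`. -/
theorem smallest_eigenvalue_sharper_bound {d : ℕ} (M σ : ℝ) (hM0 : 0 < M) (hσ0 : 0 < σ)
    (F : (Fin d → ℝ) → Matrix (Fin d) (Fin d) ℝ)
    (f : (Fin d → ℝ) → (Fin d → ℝ)) (w : (Fin d → ℝ) → (Fin d → ℝ))
    (hM : ∀ y, vnorm (w y) ≤ M)
    (hσ : ∀ y : Fin d → ℝ, (∀ n, IsUnit (jacCoc F f y n)) →
      ∀ m : ℕ, ∑ i ∈ Finset.range m, opNorm ((jacCoc F f y (i + 1))⁻¹) ≤ σ)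
    (x : Fin d → ℝ) (hx : ∀ n, IsUnit (jacCoc F f x n))
    (N : ℕ) (hN : 1 ≤ N)
    (hpos : (normalMatrix F f w x N).PosDef)
    (L : Fin d → ℝ)
    (hL : L = ∑' i : ℕ, ((jacCoc F f x (i + 1))⁻¹).mulVec (w (f^[i] x))) :
    ∃ μ : ℝ, Module.End.HasEigenvalue (Matrix.toLin' (normalMatrix F f w x N)) μ ∧
      μ ≤ (M * σ) ^ 2 * (N + 1) / (vnorm L ^ 2 + 1) :=
  smallest_eigenvalue_sharper_bound_general M σ F f w hM hσ x hx N L hL
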